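/- arXiv:1908.10257 — 3 statements merged into one kernel-verified Lean document; each statement's English description precedes it below -/
import Mathlib

section
/- Let γ : ℝ^N × ℝ^N → ℝ be defined by γ(x,y) = 1/Γ(x,y) for x ≠ y and γ(x,x) = 0, where Γ is symmetric, positive, and finite off the diagonal. Then the 'geometric condition' — there exists θ ∈ (0,1) such that for all x,y and r > 0, if x ∉ Ω(y,r) then Ω(x,θr) ∩ Ω(y,θr) = ∅, where Ω(x,r) = {z : γ(x,z) < r} — holds if and only if γ satisfies a pseudo-triangle inequality: there exists c > 1 with γ(x,y) ≤ c(γ(x,z) + γ(z,y)) for all x,y,z. -/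
/-! Taking r = γ(x,y), the point x lies outside Ω(y,r), so every z misses one of the two
disjoint balls of radius θr; hence θ γ(x,y) ≤ γ(x,z) + γ(z,y) and c = 1/θ works. Conversely,
a common point z of Ω(x,r/2c) and Ω(y,r/2c) would give γ(y,x) ≤ c(γ(y,z) + γ(z,x)) < r. -/

open Set

section QuasiMetric

variable {α : Type*} {d : α → α → ℝ}

theorem reciprocal_symm {Γ : α → α → ℝ} (hΓsym : ∀ x y, Γ x y = Γ y x)
    (hoff : ∀ x y, x ≠ y → d x y = 1 / Γ x y) (x y : α) : d x y = d y x := by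
  rcases eq_or_ne x y with rfl | hxy
  · rfl
  · rw [hoff x y hxy, hoff y x hxy.symm, hΓsym]

theorem reciprocal_nonneg {Γ : α → α → ℝ} (hΓpos : ∀ x y, x ≠ y → 0 < Γ x y)
    (hdiag : ∀ x, d x x = 0) (hoff : ∀ x y, x ≠ y → d x y = 1 / Γ x y) (x y : α) :
    0 ≤ d x y := by
  rcases eq_or_ne x y with rfl | hxy
  · exact (hdiag x).ge
  · rw [hoff x y hxy]
    exact (one_div_pos.mpr (hΓpos x y hxy)).le

theorem mul_le_add_of_balls_disjoint (hsymm : ∀ x y, d x y = d y x) (hnn : ∀ x y, 0 ≤ d x y)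
    {θ : ℝ} (hsep : ∀ x y r, 0 < r → x ∉ {z | d y z < r} →
      {z | d x z < θ * r} ∩ {z | d y z < θ * r} = ∅)
    (x y z : α) : θ * d x y ≤ d x z + d z y := by
  rcases (hnn x y).eq_or_lt with hxy | hxy
  · rw [← hxy, mul_zero]
    exact add_nonneg (hnn x z) (hnn z y)
  have hx : x ∉ {w | d y w < d x y} := by simp [hsymm y x]
  have hz : z ∉ {w | d x w < θ * d x y} ∩ {w | d y w < θ * d x y} := by
    rw [hsep x y _ hxy hx]
    exact notMem_empty z
  simp only [mem_inter_iff, mem_ofPred_eq, not_and, not_lt] at hz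
  rw [hsymm z y]
  by_cases hxz : d x z < θ * d x y
  · linarith [hz hxz, hnn x z]
  · linarith [hnn y z]

theorem balls_disjoint_of_le_mul_add (hsymm : ∀ x y, d x y = d y x) {c : ℝ} (hc : 0 < c)
    (htri : ∀ x y z, d x y ≤ c * (d x z + d z y)) (x y : α) (r : ℝ)
    (hx : x ∉ {z | d y z < r}) :
    {z | d x z < (2 * c)⁻¹ * r} ∩ {z | d y z < (2 * c)⁻¹ * r} = ∅ := by
  simp only [mem_ofPred_eq, not_lt] at hx
  refine eq_empty_iff_forall_notMem.mpr fun z ⟨hxz, hyz⟩ => hx.not_gt ?_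
  simp only [mem_ofPred_eq] at hxz hyz
  calc d y x ≤ c * (d y z + d x z) := hsymm z x ▸ htri y x z
    _ < c * ((2 * c)⁻¹ * r + (2 * c)⁻¹ * r) := by gcongr
    _ = r := by field_simp; ring

end QuasiMetric

theorem stmt_0 {N : ℕ}
    (Γ γ : (Fin N → ℝ) → (Fin N → ℝ) → ℝ)
    (hΓpos : ∀ x y, x ≠ y → 0 < Γ x y)
    (hΓsym : ∀ x y, Γ x y = Γ y x)
    (hγdiag : ∀ x, γ x x = 0)
    (hγoff : ∀ x y, x ≠ y → γ x y = 1 / Γ x y) :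
    (∃ θ : ℝ, θ ∈ Set.Ioo (0:ℝ) 1 ∧ ∀ (x y : Fin N → ℝ) (r : ℝ), 0 < r →
        x ∉ {z | γ y z < r} →
        {z | γ x z < θ * r} ∩ {z | γ y z < θ * r} = ∅) ↔
    (∃ c : ℝ, 1 < c ∧ ∀ x y z : Fin N → ℝ, γ x y ≤ c * (γ x z + γ z y)) := by
  have hsymm := reciprocal_symm hΓsym hγoff
  have hnn := reciprocal_nonneg hΓpos hγdiag hγoff
  constructor
  · rintro ⟨θ, ⟨hθ0, hθ1⟩, hsep⟩
    refine ⟨θ⁻¹, (one_lt_inv₀ hθ0).mpr hθ1, fun x y z => ?_⟩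
    exact (le_inv_mul_iff₀ hθ0).mpr (mul_le_add_of_balls_disjoint hsymm hnn hsep x y z)
  · rintro ⟨c, hc, htri⟩
    have hc0 : 0 < c := one_pos.trans hc
    refine ⟨(2 * c)⁻¹, ⟨by positivity, inv_lt_one_of_one_lt₀ (by linarith)⟩, ?_⟩
    exact fun x y r _ hx => balls_disjoint_of_le_mul_add hsymm hc0 htri x y r hx
end

section
/- Assume the doubling estimate E(x,R) ≤ (R/r)^{Q-2}·E(x,r) and the inclusion comparison E(x,r) ≤ c₁²·(ρ/r)²·E(y,ρ) whenever B(x,r) ⊆ B(y,ρ), where (ℝ^N, d) is a metric space with B the d-balls and B(x, 2d(z,y)) ⊆ B(z, 3d(z,y)) whenever d(x,z) < d(z,y). Then there exists a constant c > 1 such that E(x, d(x,y)) ≤ c·(E(x, d(x,z)) + E(z, d(z,y))) for all x, y, z ∈ ℝ^N; explicitly one can take c = max{2^{Q-2}, 3^Q c₁²/4}. -/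
/-!
Write a = d(x,z), b = d(z,y), t = d(x,y) ≤ a + b. If b ≤ a then t ≤ 2a, and doubling gives
E(x,t) ≤ 2^{Q-2} E(x,a). If a < b then B(x,2b) ⊆ B(z,3b), so the inclusion comparison and doubling
give E(x,t) ≤ E(x,2b) ≤ c₁² (3/2)² E(z,3b) ≤ c₁² (3/2)² 3^{Q-2} E(z,b) = 3^Q c₁²/4 · E(z,b).
-/

open Set

section Growth

variable {f : ℝ → ℝ} {k : ℕ}

theorem nonneg_of_pos_of_zero (hpos : ∀ r, 0 < r → 0 < f r) (h0 : f 0 = 0) {r : ℝ} (hr : 0 ≤ r) :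
    0 ≤ f r := by
  rcases hr.eq_or_lt with rfl | hr
  · exact h0.ge
  · exact (hpos r hr).le

theorem le_pow_mul_of_le_mul (hmono : MonotoneOn f (Ioi 0))
    (hgrow : ∀ r R, 0 < r → r < R → f R ≤ (R / r) ^ k * f r)
    {r t l : ℝ} (hr : 0 < r) (hfr : 0 ≤ f r) (ht : 0 < t) (hl : 1 ≤ l) (htr : t ≤ l * r) :
    f t ≤ l ^ k * f r := by
  rcases le_or_gt t r with htr' | hrt
  · calc f t ≤ f r := hmono ht hr htr'
      _ ≤ l ^ k * f r := le_mul_of_one_le_left hfr (one_le_pow₀ hl)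
  · calc f t ≤ (t / r) ^ k * f r := hgrow r t hr hrt
      _ ≤ l ^ k * f r := by
        gcongr
        rwa [div_le_iff₀ hr]

end Growth

section QuasiTriangle

variable {α : Type*} {d : α → α → ℝ} {E : α → ℝ → ℝ} {Q : ℕ}

theorem nonneg_of_triangle (hd_self : ∀ x, d x x = 0) (hd_symm : ∀ x y, d x y = d y x)
    (hd_tri : ∀ x y z, d x z ≤ d x y + d y z) (x y : α) : 0 ≤ d x y := by
  have h := hd_tri x y x
  rw [hd_self, hd_symm y x] at h
  linarith

theorem le_two_pow_mul_of_dist_le (hEpos : ∀ x r, 0 < r → 0 < E x r)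
    (hEmono : ∀ x, MonotoneOn (E x) (Ioi 0))
    (hgrow : ∀ x r R, 0 < r → r < R → E x R ≤ (R / r) ^ (Q - 2) * E x r)
    {x y z : α} (htri : d x y ≤ d x z + d z y) (hxy : 0 < d x y)
    (hle : d z y ≤ d x z) :
    E x (d x y) ≤ 2 ^ (Q - 2) * E x (d x z) := by
  have hxz : 0 < d x z := by linarith
  exact le_pow_mul_of_le_mul (hEmono x) (hgrow x) hxz (hEpos x _ hxz).le hxy one_le_two
    (by linarith)

theorem le_three_pow_mul_of_dist_lt (hQ : 2 ≤ Q) {c₁ : ℝ} (hEpos : ∀ x r, 0 < r → 0 < E x r)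
    (hEmono : ∀ x, MonotoneOn (E x) (Ioi 0))
    (hgrow : ∀ x r R, 0 < r → r < R → E x R ≤ (R / r) ^ (Q - 2) * E x r)
    (hincl : ∀ x y r ρ, 0 < r → 0 < ρ →
      {w | d x w < r} ⊆ {w | d y w < ρ} → E x r ≤ c₁ ^ 2 * (ρ / r) ^ 2 * E y ρ)
    {x y z : α} (hball : {w | d x w < 2 * d z y} ⊆ {w | d z w < 3 * d z y})
    (htri : d x y ≤ d x z + d z y) (hxy : 0 < d x y) (hxz : 0 ≤ d x z) (hlt : d x z < d z y) :
    E x (d x y) ≤ 3 ^ Q * c₁ ^ 2 / 4 * E z (d z y) := by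
  set b := d z y
  have hb : 0 < b := hxz.trans_lt hlt
  have hEb := (hEpos z b hb).le
  have hdoubling : E z (3 * b) ≤ 3 ^ (Q - 2) * E z b :=
    le_pow_mul_of_le_mul (hEmono z) (hgrow z) hb hEb (by positivity) (by norm_num) le_rfl
  have hratio : 3 * b / (2 * b) = 3 / 2 := by field_simp
  calc E x (d x y) ≤ E x (2 * b) := hEmono x hxy (by positivity : (0:ℝ) < 2 * b) (by linarith)
    _ ≤ c₁ ^ 2 * (3 / 2) ^ 2 * E z (3 * b) := by
        simpa only [hratio] using
          hincl x z (2 * b) (3 * b) (by positivity) (by positivity) hball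
    _ ≤ c₁ ^ 2 * (3 / 2) ^ 2 * (3 ^ (Q - 2) * E z b) := by gcongr
    _ = 3 ^ Q * c₁ ^ 2 / 4 * E z b := by
        rw [← Nat.sub_add_cancel hQ, pow_add, Nat.add_sub_cancel]
        ring

end QuasiTriangle

theorem stmt_8_general {Npt : ℕ} (N Q : ℕ) (hN : 3 ≤ N) (hNQ : N < Q)
    (c₁ : ℝ)
    (d : (Fin Npt → ℝ) → (Fin Npt → ℝ) → ℝ)
    (hd_self : ∀ x, d x x = 0)
    (hd_symm : ∀ x y, d x y = d y x)
    (hd_tri : ∀ x y z, d x z ≤ d x y + d y z)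
    (E : (Fin Npt → ℝ) → ℝ → ℝ)
    (hEpos : ∀ x r, 0 < r → 0 < E x r)
    (hE0 : ∀ x, E x 0 = 0)
    (hEmono : ∀ x, StrictMonoOn (E x) (Set.Ioi (0:ℝ)))
    (hgrow : ∀ x r R, 0 < r → r < R →
      (R / r) ^ (N - 2) * E x r ≤ E x R ∧ E x R ≤ (R / r) ^ (Q - 2) * E x r)
    (hincl : ∀ x y r ρ, 0 < r → 0 < ρ →
      {w | d x w < r} ⊆ {w | d y w < ρ} → E x r ≤ c₁ ^ 2 * (ρ / r) ^ 2 * E y ρ)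
    (hball : ∀ x z y : Fin Npt → ℝ, d x z < d z y →
      {w | d x w < 2 * d z y} ⊆ {w | d z w < 3 * d z y}) :
    ∃ c : ℝ, 1 < c ∧ c = max ((2:ℝ) ^ (Q - 2)) (3 ^ Q * c₁ ^ 2 / 4) ∧
      ∀ x y z : Fin Npt → ℝ, E x (d x y) ≤ c * (E x (d x z) + E z (d z y)) := by
  have hd := nonneg_of_triangle hd_self hd_symm hd_tri
  have hE x {r : ℝ} (hr : 0 ≤ r) : 0 ≤ E x r := nonneg_of_pos_of_zero (hEpos x) (hE0 x) hr
  have hmono x := (hEmono x).monotoneOn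
  have hgrowQ x r R hr hrR := (hgrow x r R hr hrR).2
  refine ⟨_, (one_lt_pow₀ one_lt_two (by omega)).trans_le (le_max_left _ _), rfl, fun x y z => ?_⟩
  have hEa := hE x (hd x z)
  have hEb := hE z (hd z y)
  rcases (hd x y).eq_or_lt with hxy | hxy
  · rw [← hxy, hE0]
    positivity
  rcases le_or_gt (d z y) (d x z) with hle | hlt
  · calc E x (d x y) ≤ 2 ^ (Q - 2) * E x (d x z) :=
          le_two_pow_mul_of_dist_le hEpos hmono hgrowQ (hd_tri x z y) hxy hle
      _ ≤ _ := by gcongr; exacts [le_max_left _ _, le_add_of_nonneg_right hEb]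
  · calc E x (d x y) ≤ 3 ^ Q * c₁ ^ 2 / 4 * E z (d z y) :=
          le_three_pow_mul_of_dist_lt (by omega) hEpos hmono hgrowQ hincl (hball x z y hlt)
            (hd_tri x z y) hxy (hd x z) hlt
      _ ≤ _ := by gcongr; exacts [le_max_right _ _, le_add_of_nonneg_left hEa]

theorem stmt_8 {Npt : ℕ} (N Q : ℕ) (hN : 3 ≤ N) (hNQ : N < Q)
    (c₁ : ℝ) (hc₁ : 1 ≤ c₁)
    (d : (Fin Npt → ℝ) → (Fin Npt → ℝ) → ℝ)
    (hd_self : ∀ x, d x x = 0)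
    (hd_pos : ∀ x y, x ≠ y → 0 < d x y)
    (hd_symm : ∀ x y, d x y = d y x)
    (hd_tri : ∀ x y z, d x z ≤ d x y + d y z)
    (E : (Fin Npt → ℝ) → ℝ → ℝ)
    (hEpos : ∀ x r, 0 < r → 0 < E x r)
    (hE0 : ∀ x, E x 0 = 0)
    (hEmono : ∀ x, StrictMonoOn (E x) (Set.Ioi (0:ℝ)))
    (hgrow : ∀ x r R, 0 < r → r < R →
      (R / r) ^ (N - 2) * E x r ≤ E x R ∧ E x R ≤ (R / r) ^ (Q - 2) * E x r)
    (hincl : ∀ x y r ρ, 0 < r → 0 < ρ →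
      {w | d x w < r} ⊆ {w | d y w < ρ} → E x r ≤ c₁ ^ 2 * (ρ / r) ^ 2 * E y ρ)
    (hball : ∀ x z y : Fin Npt → ℝ, d x z < d z y →
      {w | d x w < 2 * d z y} ⊆ {w | d z w < 3 * d z y}) :
    ∃ c : ℝ, 1 < c ∧ c = max ((2:ℝ) ^ (Q - 2)) (3 ^ Q * c₁ ^ 2 / 4) ∧
      ∀ x y z : Fin Npt → ℝ, E x (d x y) ≤ c * (E x (d x z) + E z (d z y)) :=
  stmt_8_general N Q hN hNQ c₁ d hd_self hd_symm hd_tri E hEpos hE0 hEmono hgrow hincl hball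
end

section
/- Every half-space Π = {x ∈ ℝ^N : ⟨x,v⟩ ≥ h} (v ≠ 0, h ∈ ℝ) contains a non-degenerate δ_λ-cone, i.e. a set C with nonempty interior such that δ_λ(C) ⊆ C for every λ ≥ λ₀ for some λ₀ > 0. In fact C := {x ∈ Π : x_i v_i ≥ 0 for all i} works with λ₀ = 1. -/
/-!
Scaling the coordinates by factors `λ ^ σ i ≥ 1` multiplies each term `x i * v i` by a factor
`≥ 1`; as these terms are nonnegative on `C`, neither the terms nor their sum can decrease.
For the interior, a large multiple `t • v` satisfies all defining inequalities strictly
(those with `v i = 0` hold trivially), and the strict inequalities cut out an open subset of `C`.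
-/

open Matrix

def orthantHalfSpace {ι : Type*} [Fintype ι] (v : ι → ℝ) (h : ℝ) : Set (ι → ℝ) :=
  {x | h ≤ x ⬝ᵥ v ∧ ∀ i, 0 ≤ x i * v i}

section OrthantHalfSpace

variable {ι : Type*} [Fintype ι] {v : ι → ℝ} {h : ℝ}

theorem mul_mem_orthantHalfSpace {c x : ι → ℝ} (hc : ∀ i, 1 ≤ c i)
    (hx : x ∈ orthantHalfSpace v h) : (fun i => c i * x i) ∈ orthantHalfSpace v h := by
  have hterm : ∀ i, x i * v i ≤ c i * x i * v i := fun i => by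
    rw [mul_assoc]
    exact le_mul_of_one_le_left (hx.2 i) (hc i)
  exact ⟨hx.1.trans (Finset.sum_le_sum fun i _ => hterm i), fun i => (hx.2 i).trans (hterm i)⟩

theorem isOpen_setOf_strict_orthantHalfSpace :
    IsOpen {x : ι → ℝ | h < x ⬝ᵥ v ∧ ∀ i, 0 < x i * v i ∨ v i = 0} := by
  have hsign : IsOpen {x : ι → ℝ | ∀ i, 0 < x i * v i ∨ v i = 0} := by
    rw [Set.ofPred_forall]
    refine isOpen_iInter_of_finite fun i => ?_
    rw [Set.ofPred_or]
    exact (isOpen_lt continuous_const (by fun_prop)).union isOpen_const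
  exact (isOpen_lt continuous_const (continuous_id.dotProduct continuous_const)).inter hsign

theorem smul_mem_interior_orthantHalfSpace {t : ℝ} (ht : 0 < t) (hlt : h < (t • v) ⬝ᵥ v) :
    t • v ∈ interior (orthantHalfSpace v h) := by
  refine interior_maximal ?_ isOpen_setOf_strict_orthantHalfSpace ⟨hlt, fun i => ?_⟩
  · exact fun x hx => ⟨hx.1.le, fun i => (hx.2 i).elim le_of_lt fun hvi => by simp [hvi]⟩
  · by_cases hvi : v i = 0
    · exact Or.inr hvi
    · left
      simpa only [Pi.smul_apply, smul_eq_mul, mul_assoc] using mul_pos ht (mul_self_pos.2 hvi)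

theorem interior_orthantHalfSpace_nonempty (hv : v ≠ 0) :
    (interior (orthantHalfSpace v h)).Nonempty := by
  have hvv : 0 < v ⬝ᵥ v := by simpa using dotProduct_self_star_pos_iff.2 hv
  set t := (|h| + 1) / (v ⬝ᵥ v)
  have hlt : h < (t • v) ⬝ᵥ v := by
    rw [smul_dotProduct, smul_eq_mul, div_mul_cancel₀ _ hvv.ne']
    linarith [le_abs_self h]
  exact ⟨_, smul_mem_interior_orthantHalfSpace (by positivity) hlt⟩

end OrthantHalfSpace

theorem stmt_14 {N : ℕ} (σ : Fin N → ℝ) (hσ : ∀ i, 1 ≤ σ i)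
    (v : Fin N → ℝ) (hv : v ≠ 0) (h : ℝ) :
    ∃ C : Set (Fin N → ℝ),
      C = {x | h ≤ ∑ i, x i * v i ∧ ∀ i, 0 ≤ x i * v i} ∧
      C ⊆ {x | h ≤ ∑ i, x i * v i} ∧
      (interior C).Nonempty ∧
      ∃ lam₀ : ℝ, 0 < lam₀ ∧ ∀ lam : ℝ, lam₀ ≤ lam →
        (fun x : Fin N → ℝ => fun i => lam ^ (σ i) * x i) '' C ⊆ C := by
  refine ⟨orthantHalfSpace v h, rfl, fun _ hx => hx.1, interior_orthantHalfSpace_nonempty hv,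
    1, one_pos, ?_⟩
  rintro lam hlam _ ⟨x, hx, rfl⟩
  exact mul_mem_orthantHalfSpace (fun i => Real.one_le_rpow hlam (zero_le_one.trans (hσ i))) hx
end
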